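/- Let A be a Banach algebra such that every cyclic bounded derivation D : A → A* is weakly compact. If the topological center Z(A**) = {G ∈ A** : F ↦ G □ F is weak*-weak* continuous} (a closed subalgebra of (A**, □)) is approximately cyclic amenable, then A is approximately cyclic amenable. -/

import Mathlib

open Filter Topology

set_option synthInstance.maxHeartbeats 1000000
set_option maxHeartbeats 1600000

noncomputable section

universe u v

variable {A : Type u} [NonUnitalNormedRing A] [NormedSpace ℂ A]
  [IsScalarTower ℂ A A] [SMulCommClass ℂ A A]

/-- The left module action of `A` on its dual `A*`: `(a · f) b = f (b * a)`. -/
def lAct (a : A) (f : A →L[ℂ] ℂ) : A →L[ℂ] ℂ :=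
  f.comp ((ContinuousLinearMap.mul ℂ A).flip a)

/-- The right module action of `A` on its dual `A*`: `(f · a) b = f (a * b)`. -/
def rAct (f : A →L[ℂ] ℂ) (a : A) : A →L[ℂ] ℂ :=
  f.comp (ContinuousLinearMap.mul ℂ A a)

/-- A bounded linear `D : A → A*` is a derivation if `D (a * b) = D a · b + a · D b`. -/
def IsDerivation (D : A →L[ℂ] (A →L[ℂ] ℂ)) : Prop :=
  ∀ a b : A, D (a * b) = rAct (D a) b + lAct a (D b)

/-- A derivation `D : A → A*` is cyclic if `⟨D a, b⟩ + ⟨D b, a⟩ = 0` for all `a, b`. -/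
def IsCyclicDeriv (D : A →L[ℂ] (A →L[ℂ] ℂ)) : Prop :=
  ∀ a b : A, D a b + D b a = 0

/-- `D : A → A*` is approximately inner if there is a net `(f i)` in `A*` with
`D a = lim_i (a · f i - f i · a)` in norm, for every `a ∈ A`. -/
def IsApproxInner {A : Type u} [NonUnitalNormedRing A] [NormedSpace ℂ A]
    [IsScalarTower ℂ A A] [SMulCommClass ℂ A A] (D : A →L[ℂ] (A →L[ℂ] ℂ)) : Prop :=
  ∃ (ι : Type u) (l : Filter ι) (f : ι → (A →L[ℂ] ℂ)), l.NeBot ∧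
    ∀ a : A, Tendsto (fun i => lAct a (f i) - rAct (f i) a) l (𝓝 (D a))

/-- `D : A → A*` is inner if `D a = a · f - f · a` for some fixed `f ∈ A*`. -/
def IsInner (D : A →L[ℂ] (A →L[ℂ] ℂ)) : Prop :=
  ∃ f : A →L[ℂ] ℂ, ∀ a : A, D a = lAct a f - rAct f a

/-- A Banach algebra is approximately cyclic amenable if every cyclic bounded
derivation `D : A → A*` is approximately inner. -/
def ApproxCyclicAmenable (A : Type u) [NonUnitalNormedRing A] [NormedSpace ℂ A]
    [IsScalarTower ℂ A A] [SMulCommClass ℂ A A] : Prop :=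
  ∀ D : A →L[ℂ] (A →L[ℂ] ℂ), IsDerivation D → IsCyclicDeriv D → IsApproxInner D

/-- A Banach algebra is cyclic amenable if every cyclic bounded derivation
`D : A → A*` is inner. -/
def CyclicAmenable (A : Type u) [NonUnitalNormedRing A] [NormedSpace ℂ A]
    [IsScalarTower ℂ A A] [SMulCommClass ℂ A A] : Prop :=
  ∀ D : A →L[ℂ] (A →L[ℂ] ℂ), IsDerivation D → IsCyclicDeriv D → IsInner D

/-- The bidual of `A`; below we install the first Arens product on it. -/
abbrev Bidual (A : Type u) [NormedAddCommGroup A] [NormedSpace ℂ A] : Type u :=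
  (A →L[ℂ] ℂ) →L[ℂ] ℂ

namespace Bidual

variable (A)

/-- `f ↦ (a ↦ f · a)` where `(f · a) b = f (a * b)`, as a continuous bilinear map. -/
def rActL : (A →L[ℂ] ℂ) →L[ℂ] A →L[ℂ] (A →L[ℂ] ℂ) :=
  (((ContinuousLinearMap.compL ℂ A (A →L[ℂ] A) (A →L[ℂ] ℂ)).flip
      (ContinuousLinearMap.mul ℂ A)).comp
    (ContinuousLinearMap.compL ℂ A A ℂ))

@[simp] lemma rActL_apply (f : A →L[ℂ] ℂ) (a b : A) : rActL A f a b = f (a * b) := rfl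

/-- The action `G · f` of the bidual on the dual: `(G · f) a = G (f · a)`. -/
def dotAct (G : Bidual A) : (A →L[ℂ] ℂ) →L[ℂ] (A →L[ℂ] ℂ) :=
  (ContinuousLinearMap.compL ℂ A (A →L[ℂ] ℂ) ℂ G).comp (rActL A)

@[simp] lemma dotAct_apply (G : Bidual A) (f : A →L[ℂ] ℂ) (a : A) :
    dotAct A G f a = G (rActL A f a) := rfl

variable {A}

/-- The first Arens product on the bidual: `⟨F □ G, f⟩ = ⟨F, G · f⟩`. -/
instance : Mul (Bidual A) := ⟨fun F G => F.comp (dotAct A G)⟩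

@[simp] lemma mul_apply (F G : Bidual A) (f : A →L[ℂ] ℂ) :
    (F * G) f = F (dotAct A G f) := rfl

lemma dotAct_add (G H : Bidual A) : dotAct A (G + H) = dotAct A G + dotAct A H := by
  refine ContinuousLinearMap.ext fun g => ContinuousLinearMap.ext fun a => ?_
  simp

lemma dotAct_zero : dotAct A (0 : Bidual A) = 0 := by
  refine ContinuousLinearMap.ext fun g => ContinuousLinearMap.ext fun a => ?_
  simp

lemma dotAct_smul (c : ℂ) (G : Bidual A) : dotAct A (c • G) = c • dotAct A G := by
  refine ContinuousLinearMap.ext fun g => ContinuousLinearMap.ext fun a => ?_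
  simp

instance instNonUnitalRing : NonUnitalRing (Bidual A) where
  __ := (inferInstance : AddCommGroup ((A →L[ℂ] ℂ) →L[ℂ] ℂ))
  mul := (· * ·)
  left_distrib F G H := by
    refine ContinuousLinearMap.ext fun f => ?_
    simp [dotAct_add]
  right_distrib F G H := by
    refine ContinuousLinearMap.ext fun f => ?_
    rfl
  zero_mul F := by refine ContinuousLinearMap.ext fun f => ?_; rfl
  mul_zero F := by
    refine ContinuousLinearMap.ext fun f => ?_
    simp [dotAct_zero]
  mul_assoc F G H := by
    refine ContinuousLinearMap.ext fun f => ?_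
    show F _ = F _
    congr 1
    refine ContinuousLinearMap.ext fun a => ?_
    show G _ = G _
    congr 1
    refine ContinuousLinearMap.ext fun b => ?_
    show H _ = H _
    congr 1
    refine ContinuousLinearMap.ext fun c => ?_
    exact congrArg f (mul_assoc a b c)

lemma norm_dotAct_apply_le (G : Bidual A) (f : A →L[ℂ] ℂ) :
    ‖dotAct A G f‖ ≤ ‖G‖ * ‖f‖ := by
  refine ContinuousLinearMap.opNorm_le_bound _ (by positivity) fun a => ?_
  calc ‖G (rActL A f a)‖ ≤ ‖G‖ * ‖rActL A f a‖ := G.le_opNorm _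
    _ ≤ ‖G‖ * (‖f‖ * ‖a‖) := by
        refine mul_le_mul_of_nonneg_left ?_ (norm_nonneg G)
        refine ContinuousLinearMap.opNorm_le_bound _ (by positivity) fun b => ?_
        calc ‖f (a * b)‖ ≤ ‖f‖ * ‖a * b‖ := f.le_opNorm _
          _ ≤ ‖f‖ * (‖a‖ * ‖b‖) :=
              mul_le_mul_of_nonneg_left (norm_mul_le a b) (norm_nonneg f)
          _ = ‖f‖ * ‖a‖ * ‖b‖ := by ring
    _ = ‖G‖ * ‖f‖ * ‖a‖ := by ring

instance instNonUnitalNormedRing : NonUnitalNormedRing (Bidual A) where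
  __ := instNonUnitalRing
  __ := (inferInstance : NormedAddCommGroup ((A →L[ℂ] ℂ) →L[ℂ] ℂ))
  norm_mul_le F G := by
    refine ContinuousLinearMap.opNorm_le_bound _ (by positivity) fun f => ?_
    calc ‖F (dotAct A G f)‖ ≤ ‖F‖ * ‖dotAct A G f‖ := F.le_opNorm _
      _ ≤ ‖F‖ * (‖G‖ * ‖f‖) :=
          mul_le_mul_of_nonneg_left (norm_dotAct_apply_le G f) (norm_nonneg F)
      _ = ‖F‖ * ‖G‖ * ‖f‖ := by ring

instance : IsScalarTower ℂ (Bidual A) (Bidual A) where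
  smul_assoc c F G := by
    refine ContinuousLinearMap.ext fun f => ?_
    rfl

instance : SMulCommClass ℂ (Bidual A) (Bidual A) where
  smul_comm c F G := by
    refine ContinuousLinearMap.ext fun f => ?_
    show c • (F (dotAct A G f)) = F (dotAct A (c • G) f)
    rw [dotAct_smul]
    simp

end Bidual

/-- A bounded linear operator between normed spaces is weakly compact if the image of the
closed unit ball is relatively compact in the weak topology of the codomain. -/
def IsWeaklyCompactOp {E : Type u} {F : Type v} [NormedAddCommGroup E] [NormedSpace ℂ E]
    [NormedAddCommGroup F] [NormedSpace ℂ F] (T : E →L[ℂ] F) : Prop :=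
  IsCompact (closure ((toWeakSpace ℂ F) '' (T '' Metric.closedBall 0 1)))

variable (A) in
/-- The topological centre `Z(A**)` of the bidual with the first Arens product: those `G`
for which `F ↦ G □ F` is weak*-weak* continuous.  It is a subalgebra of `(A**, □)`. -/
def topCenter : NonUnitalSubalgebra ℂ (Bidual A) where
  carrier := {G : Bidual A | Continuous fun F : WeakDual ℂ (A →L[ℂ] ℂ) =>
    StrongDual.toWeakDual (G * StrongDual.toWeakDual.symm F)}
  zero_mem' := by
    show Continuous fun F : WeakDual ℂ (A →L[ℂ] ℂ) =>
      StrongDual.toWeakDual ((0 : Bidual A) * StrongDual.toWeakDual.symm F)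
    simp only [zero_mul]
    exact continuous_const
  add_mem' := fun {G₁ G₂} h₁ h₂ => by
    show Continuous fun F : WeakDual ℂ (A →L[ℂ] ℂ) =>
      StrongDual.toWeakDual ((G₁ + G₂) * StrongDual.toWeakDual.symm F)
    simp only [add_mul, map_add]
    exact Continuous.add h₁ h₂
  smul_mem' := fun c G h => by
    show Continuous fun F : WeakDual ℂ (A →L[ℂ] ℂ) =>
      StrongDual.toWeakDual ((c • G) * StrongDual.toWeakDual.symm F)
    simp only [smul_mul_assoc, map_smul]
    exact Continuous.const_smul h c
  mul_mem' := fun {G₁ G₂} h₁ h₂ => by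
    show Continuous fun F : WeakDual ℂ (A →L[ℂ] ℂ) =>
      StrongDual.toWeakDual ((G₁ * G₂) * StrongDual.toWeakDual.symm F)
    have key : (fun F : WeakDual ℂ (A →L[ℂ] ℂ) =>
          StrongDual.toWeakDual ((G₁ * G₂) * StrongDual.toWeakDual.symm F))
        = (fun W : WeakDual ℂ (A →L[ℂ] ℂ) =>
            StrongDual.toWeakDual (G₁ * StrongDual.toWeakDual.symm W)) ∘
          (fun F : WeakDual ℂ (A →L[ℂ] ℂ) =>
            StrongDual.toWeakDual (G₂ * StrongDual.toWeakDual.symm F)) := by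
      funext F
      simp only [Function.comp_apply, LinearEquiv.symm_apply_apply]
      rw [mul_assoc]
    rw [key]
    exact Continuous.comp h₁ h₂

noncomputable instance : NonUnitalNormedRing ↥(topCenter A) := inferInstance

noncomputable instance : NormedSpace ℂ ↥(topCenter A) :=
  @SubmoduleClass.toNormedSpace (NonUnitalSubalgebra ℂ (Bidual A)) ℂ ℂ (Bidual A) _ _ _ _ _ _ _ _ _ _ (topCenter A)

instance : IsScalarTower ℂ ↥(topCenter A) ↥(topCenter A) := inferInstance

instance : SMulCommClass ℂ ↥(topCenter A) ↥(topCenter A) := inferInstance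

/-!
By Goldstine's theorem every `H ∈ A**` is a weak* limit of a bounded net `aᵢ` in `A`; weak
compactness of `D` lets `D aᵢ` converge weakly along a subnet, and cyclicity identifies the
limit as `-D' H`, where `D' : A** → A*` is the adjoint of `D`. Hence `(G, H) ↦ ⟨G, D' H⟩` is
skew on all of `A**`. On the topological centre `Z(A**)`, where `K □ ·` is weak* continuous,
the derivation identity extends from `A` by weak* density, so `G ↦ (K ↦ -⟨K, D' G⟩)` is a
cyclic derivation of `Z(A**)` that restricts to `D` on `A`. A net implementing it
approximately pulls back along `A → Z(A**)`.
-/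

namespace ContinuousLinearMap

variable {𝕜 E F : Type*} [NontriviallyNormedField 𝕜] [NormedAddCommGroup E] [NormedSpace 𝕜 E]
  [NormedAddCommGroup F] [NormedSpace 𝕜 F]

def dualMap (T : E →L[𝕜] F) : StrongDual 𝕜 F →L[𝕜] StrongDual 𝕜 E :=
  (compL 𝕜 E F 𝕜).flip T

@[simp] lemma dualMap_apply (T : E →L[𝕜] F) (φ : StrongDual 𝕜 F) (x : E) :
    T.dualMap φ x = φ (T x) := rfl

end ContinuousLinearMap

namespace NormedSpace

open StrongDual

variable {𝕜 E : Type*} [RCLike 𝕜] [NormedAddCommGroup E] [NormedSpace 𝕜 E]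

lemma exists_forall_mem_apply_eq (V : Submodule 𝕜 (StrongDual 𝕜 E)) [FiniteDimensional 𝕜 V]
    (H : StrongDual 𝕜 (StrongDual 𝕜 E)) : ∃ x : E, ∀ f ∈ V, f x = H f := by
  let C : V →ₗ[𝕜] E →ₗ[𝕜] 𝕜 := (ContinuousLinearMap.coeLM 𝕜).comp V.subtype
  have hC : Function.Injective C := fun f g hfg =>
    Subtype.ext (ContinuousLinearMap.coe_injective hfg)
  have hsurj : Function.Surjective C.flip :=
    (LinearMap.flip_surjective_iff₁ (K := 𝕜) (V₁ := V) (V₂ := E) (B := C)).mpr hC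
  obtain ⟨x, hx⟩ := hsurj (H.toLinearMap ∘ₗ V.subtype)
  exact ⟨x, fun f hf => LinearMap.congr_fun hx ⟨f, hf⟩⟩

lemma mem_span_of_iInf_ker_le_ker {s : Finset (StrongDual 𝕜 E)} {g : StrongDual 𝕜 E}
    (h : ⨅ f : s, LinearMap.ker (f : StrongDual 𝕜 E).toLinearMap ≤ LinearMap.ker g.toLinearMap) :
    g ∈ Submodule.span 𝕜 (s : Set (StrongDual 𝕜 E)) := by
  have hg := _root_.mem_span_of_iInf_ker_le_ker h
  have hrange : Set.range (fun f : s => (f : StrongDual 𝕜 E).toLinearMap) =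
      ContinuousLinearMap.coeLM 𝕜 '' (s : Set (StrongDual 𝕜 E)) := by
    ext; simp
  rw [hrange, Submodule.span_image] at hg
  obtain ⟨u, hu, hug⟩ := hg
  rwa [ContinuousLinearMap.coe_injective hug] at hu

/-- Helly's lemma. -/
lemma exists_norm_le_forall_apply_eq (H : StrongDual 𝕜 (StrongDual 𝕜 E)) {r : ℝ} (hr : ‖H‖ < r)
    (s : Finset (StrongDual 𝕜 E)) : ∃ x : E, ‖x‖ ≤ r ∧ ∀ f ∈ s, f x = H f := by
  obtain ⟨x₀, hx₀⟩ := exists_forall_mem_apply_eq (Submodule.span 𝕜 (s : Set _)) H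
  set N : Submodule 𝕜 E := ⨅ f : s, LinearMap.ker (f : StrongDual 𝕜 E).toLinearMap
  have hquot : ‖N.mkQ x₀‖ ≤ ‖H‖ := by
    obtain ⟨g, hg1, hgx⟩ := exists_dual_vector'' 𝕜 (N.mkQ x₀)
    have hspan : g.comp N.mkQL ∈ Submodule.span 𝕜 (s : Set (StrongDual 𝕜 E)) :=
      mem_span_of_iInf_ker_le_ker fun x hx => by
        simp [LinearMap.mem_ker, (Submodule.Quotient.mk_eq_zero N).2 hx]
    have hnorm : ‖g.comp N.mkQL‖ ≤ 1 :=
      ContinuousLinearMap.opNorm_le_bound _ zero_le_one fun x => by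
        simpa using (g.le_opNorm _).trans
          (mul_le_mul hg1 (Submodule.Quotient.norm_mk_le N x) (norm_nonneg _) zero_le_one)
    calc ‖N.mkQ x₀‖ = ‖g.comp N.mkQL x₀‖ := by
          rw [ContinuousLinearMap.comp_apply, Submodule.mkQL_apply, hgx, RCLike.norm_ofReal,
            abs_norm]
      _ = ‖H (g.comp N.mkQL)‖ := by rw [hx₀ _ hspan]
      _ ≤ ‖H‖ * ‖g.comp N.mkQL‖ := H.le_opNorm _
      _ ≤ ‖H‖ := mul_le_of_le_one_right (norm_nonneg H) hnorm
  obtain ⟨x, hxx₀, hx⟩ := Submodule.Quotient.norm_mk_lt (N.mkQ x₀) (sub_pos.2 hr)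
  refine ⟨x, by linarith, fun f hf => ?_⟩
  have hsub : x - x₀ ∈ N := (Submodule.Quotient.eq N).1 hxx₀
  rw [← hx₀ f (Submodule.subset_span hf), ← sub_eq_zero, ← map_sub]
  exact (Submodule.mem_iInf _).1 hsub ⟨f, hf⟩

/-- Goldstine's theorem. -/
theorem mem_closure_image_closedBall (H : StrongDual 𝕜 (StrongDual 𝕜 E)) {r : ℝ}
    (hr : ‖H‖ < r) : toWeakDual H ∈
      closure ((fun x => toWeakDual (inclusionInDoubleDual 𝕜 E x)) '' Metric.closedBall 0 r) := by
  have hind : IsInducing fun (G : WeakDual 𝕜 (StrongDual 𝕜 E)) (f : StrongDual 𝕜 E) => G f :=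
    ⟨rfl⟩
  rw [mem_closure_iff]
  rintro _ ho hHo
  obtain ⟨V, hV, rfl⟩ := hind.isOpen_iff.1 ho
  obtain ⟨s, u, hu, hsu⟩ := isOpen_pi_iff.1 hV _ hHo
  obtain ⟨x, hxr, hx⟩ := exists_norm_le_forall_apply_eq H hr s
  refine ⟨_, hsu fun f hf => ?_, x, mem_closedBall_zero_iff.2 hxr, rfl⟩
  simpa [hx f hf] using (hu f hf).2

theorem exists_tendsto_inclusionInDoubleDual (H : StrongDual 𝕜 (StrongDual 𝕜 E)) {r : ℝ}
    (hr : ‖H‖ < r) : ∃ l : Filter E, l.NeBot ∧ Metric.closedBall 0 r ∈ l ∧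
      Tendsto (fun x => toWeakDual (inclusionInDoubleDual 𝕜 E x)) l (𝓝 (toWeakDual H)) := by
  set J := fun x => toWeakDual (inclusionInDoubleDual 𝕜 E x)
  refine ⟨comap J (𝓝 (toWeakDual H)) ⊓ 𝓟 (Metric.closedBall 0 r), ?_,
    mem_inf_of_right (mem_principal_self _), tendsto_comap.mono_left inf_le_left⟩
  rw [← map_neBot_iff J, Filter.push_pull', map_principal]
  exact mem_closure_iff_clusterPt.1 (mem_closure_image_closedBall H hr)

theorem eq_of_forall_inclusionInDoubleDual {Y : Type*} [TopologicalSpace Y] [T2Space Y]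
    {φ ψ : WeakDual 𝕜 (StrongDual 𝕜 E) → Y} (hφ : Continuous φ) (hψ : Continuous ψ)
    (h : ∀ x, φ (toWeakDual (inclusionInDoubleDual 𝕜 E x)) =
      ψ (toWeakDual (inclusionInDoubleDual 𝕜 E x)))
    (G : StrongDual 𝕜 (StrongDual 𝕜 E)) : φ (toWeakDual G) = ψ (toWeakDual G) := by
  obtain ⟨l, hl, -, hJ⟩ := exists_tendsto_inclusionInDoubleDual G (lt_add_one ‖G‖)
  refine tendsto_nhds_unique ((hφ.tendsto _).comp hJ) ?_
  simpa only [Function.comp_def, h] using (hψ.tendsto _).comp hJ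

end NormedSpace

section WeaklyCompact

open NormedSpace

variable {E F : Type*} [NormedAddCommGroup E] [NormedSpace ℂ E]
  [NormedAddCommGroup F] [NormedSpace ℂ F]

theorem IsWeaklyCompactOp.exists_le_tendsto {T : E →L[ℂ] F} (hT : IsWeaklyCompactOp T)
    {l : Filter E} [l.NeBot] (hl : Metric.closedBall 0 1 ∈ l) :
    ∃ l' ≤ l, l'.NeBot ∧
      ∃ y : F, ∀ Φ : StrongDual ℂ F, Tendsto (fun x => Φ (T x)) l' (𝓝 (Φ y)) := by
  set T' := fun x => toWeakSpace ℂ F (T x)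
  have hmaps : map T' l ≤ 𝓟 (closure (toWeakSpace ℂ F '' (T '' Metric.closedBall 0 1))) :=
    le_principal_iff.2 <| mem_map.2 <| mem_of_superset hl fun x hx =>
      subset_closure ⟨T x, ⟨x, hx, rfl⟩, rfl⟩
  obtain ⟨y, -, hy⟩ := hT.exists_clusterPt hmaps
  refine ⟨l ⊓ comap T' (𝓝 y), inf_le_left, ?_, (toWeakSpace ℂ F).symm y, fun Φ => ?_⟩
  · rw [← map_neBot_iff T', Filter.push_pull, inf_comm]
    exact hy
  · exact ((WeakBilin.eval_continuous _ Φ).tendsto y).comp (tendsto_comap.mono_left inf_le_right)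

variable {D : E →L[ℂ] StrongDual ℂ E}

theorem apply_dualMap_add_apply_dualMap_eq_zero_of_norm_lt_one
    (hskew : ∀ a b, D a b + D b a = 0) (hD : IsWeaklyCompactOp D)
    (G : StrongDual ℂ (StrongDual ℂ E)) {H : StrongDual ℂ (StrongDual ℂ E)} (hH : ‖H‖ < 1) :
    G (D.dualMap H) + H (D.dualMap G) = 0 := by
  obtain ⟨l, hl, hball, hJ⟩ := exists_tendsto_inclusionInDoubleDual H hH
  obtain ⟨l', hl'l, hl', ψ, hψ⟩ := hD.exists_le_tendsto hball
  have hJH : ∀ f : StrongDual ℂ E, Tendsto (fun x => f x) l' (𝓝 (H f)) := fun f =>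
    ((WeakDual.eval_continuous f).tendsto _).comp (hJ.mono_left hl'l)
  have hψ_eq : ψ = -D.dualMap H := by
    ext b
    refine tendsto_nhds_unique (hψ (inclusionInDoubleDual ℂ E b)) ?_
    simpa [eq_neg_of_add_eq_zero_left (hskew _ b)] using (hJH (D b)).neg
  have := tendsto_nhds_unique (hψ G) (hJH (D.dualMap G))
  rw [hψ_eq, map_neg] at this
  linear_combination -this

theorem apply_dualMap_add_apply_dualMap_eq_zero
    (hskew : ∀ a b, D a b + D b a = 0) (hD : IsWeaklyCompactOp D)
    (G H : StrongDual ℂ (StrongDual ℂ E)) : G (D.dualMap H) + H (D.dualMap G) = 0 := by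
  set c : ℂ := (((‖H‖ + 1)⁻¹ : ℝ) : ℂ)
  have hc : c ≠ 0 := Complex.ofReal_ne_zero.2 (by positivity)
  have hcH : ‖c • H‖ < 1 := by
    refine (ContinuousLinearMap.opNorm_smul_le c H).trans_lt ?_
    rw [Complex.norm_real, Real.norm_of_nonneg (by positivity), inv_mul_lt_one₀ (by positivity)]
    exact lt_add_one _
  have := apply_dualMap_add_apply_dualMap_eq_zero_of_norm_lt_one hskew hD G hcH
  simp only [map_smul, smul_apply, smul_eq_mul] at this
  exact (mul_eq_zero.1 (by linear_combination this)).resolve_left hc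

end WeaklyCompact

section Arens

open NormedSpace StrongDual

variable {D : A →L[ℂ] (A →L[ℂ] ℂ)}

@[simp] lemma rAct_apply (f : A →L[ℂ] ℂ) (a b : A) : rAct f a b = f (a * b) := rfl

@[simp] lemma lAct_apply (a : A) (f : A →L[ℂ] ℂ) (b : A) : lAct a f b = f (b * a) := rfl

lemma inclusionInDoubleDual_mul (a b : A) :
    inclusionInDoubleDual ℂ A (a * b) = inclusionInDoubleDual ℂ A a * inclusionInDoubleDual ℂ A b :=
  rfl

lemma inclusionInDoubleDual_mem_topCenter (a : A) : inclusionInDoubleDual ℂ A a ∈ topCenter A :=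
  WeakDual.continuous_of_continuous_eval fun f => WeakDual.eval_continuous (Bidual.rActL A f a)

lemma IsDerivation.rActL_dualMap (hD : IsDerivation D) (K : Bidual A) (a : A) :
    Bidual.rActL A (D.dualMap K) a =
      Bidual.dotAct A K (D a) + D.dualMap (K * inclusionInDoubleDual ℂ A a) := by
  ext b
  show K (D (a * b)) = K (rAct (D a) b) + K (lAct a (D b))
  rw [hD, map_add]

/-- Checked for `G ∈ A` and extended by weak* density: both sides are weak* continuous in `G`
because `K ∈ Z(A**)`. -/
lemma mul_apply_dualMap_of_mem_topCenter (hD : IsDerivation D) (hcyc : IsCyclicDeriv D)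
    (hwc : IsWeaklyCompactOp D) {K : Bidual A} (hK : K ∈ topCenter A) (G H : Bidual A) :
    (G * H) (D.dualMap K) = G (D.dualMap (H * K)) + H (D.dualMap (K * G)) := by
  have hskew₂ := apply_dualMap_add_apply_dualMap_eq_zero hcyc hwc
  have key := eq_of_forall_inclusionInDoubleDual (𝕜 := ℂ) (E := A)
    (φ := fun W => toWeakDual.symm W (Bidual.dotAct A H (D.dualMap K)))
    (ψ := fun W => toWeakDual.symm W (D.dualMap (H * K)) - (K * toWeakDual.symm W) (D.dualMap H))
    (WeakDual.eval_continuous _)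
    ((WeakDual.eval_continuous _).sub ((WeakDual.eval_continuous _).comp hK))
    (fun a => by
      simp only [LinearEquiv.symm_apply_apply]
      have := hskew₂ (K * inclusionInDoubleDual ℂ A a) H
      show H (Bidual.rActL A (D.dualMap K) a) = H (Bidual.dotAct A K (D a)) - _
      rw [hD.rActL_dualMap, map_add]
      linear_combination this) G
  simp only [LinearEquiv.symm_apply_apply] at key
  rw [Bidual.mul_apply, key]
  linear_combination -hskew₂ (K * G) H

lemma apply_dualMap_mul_of_mem_topCenter (hD : IsDerivation D) (hcyc : IsCyclicDeriv D)
    (hwc : IsWeaklyCompactOp D) {K : Bidual A} (hK : K ∈ topCenter A) (G H : Bidual A) :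
    K (D.dualMap (G * H)) = (H * K) (D.dualMap G) + (K * G) (D.dualMap H) := by
  have hskew₂ := apply_dualMap_add_apply_dualMap_eq_zero hcyc hwc
  linear_combination -mul_apply_dualMap_of_mem_topCenter hD hcyc hwc hK G H +
    hskew₂ (G * H) K - hskew₂ (H * K) G - hskew₂ (K * G) H

end Arens

lemma IsApproxInner.dualMap_comp_comp {B : Type u} [NonUnitalNormedRing B] [NormedSpace ℂ B]
    [IsScalarTower ℂ B B] [SMulCommClass ℂ B B] {D : B →L[ℂ] (B →L[ℂ] ℂ)} (hD : IsApproxInner D)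
    {φ : A →L[ℂ] B} (hφ : ∀ a b, φ (a * b) = φ a * φ b) :
    IsApproxInner (φ.dualMap ∘L D ∘L φ) := by
  obtain ⟨ι, l, f, hl, hf⟩ := hD
  refine ⟨ι, l, fun i => φ.dualMap (f i), hl, fun a => ?_⟩
  have hcomm : ∀ g, lAct a (φ.dualMap g) - rAct (φ.dualMap g) a =
      φ.dualMap (lAct (φ a) g - rAct g (φ a)) := fun g => by
    ext b
    simp [hφ]
  simp only [hcomm]
  exact (φ.dualMap.continuous.tendsto _).comp (hf (φ a))

namespace topCenter

def subtypeL : topCenter A →L[ℂ] Bidual A where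
  toFun := Subtype.val
  map_add' _ _ := rfl
  map_smul' _ _ := rfl

def inclusionInDoubleDual : A →L[ℂ] topCenter A :=
  (NormedSpace.inclusionInDoubleDual ℂ A).codRestrict (topCenter A).toSubmodule
    inclusionInDoubleDual_mem_topCenter

end topCenter

section TopCenterDeriv

def topCenterDeriv (D : A →L[ℂ] (A →L[ℂ] ℂ)) :
    topCenter A →L[ℂ] (topCenter A →L[ℂ] ℂ) :=
  -(topCenter.subtypeL.dualMap ∘L NormedSpace.inclusionInDoubleDual ℂ (A →L[ℂ] ℂ) ∘L
    D.dualMap ∘L topCenter.subtypeL)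

variable {D : A →L[ℂ] (A →L[ℂ] ℂ)}

@[simp] lemma topCenterDeriv_apply (G K : topCenter A) :
    topCenterDeriv D G K = -(K : Bidual A) (D.dualMap G) := rfl

lemma isCyclicDeriv_topCenterDeriv (hcyc : IsCyclicDeriv D) (hwc : IsWeaklyCompactOp D) :
    IsCyclicDeriv (topCenterDeriv D) := fun G H => by
  simp only [topCenterDeriv_apply]
  linear_combination -apply_dualMap_add_apply_dualMap_eq_zero hcyc hwc (G : Bidual A) H

lemma isDerivation_topCenterDeriv (hD : IsDerivation D) (hcyc : IsCyclicDeriv D)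
    (hwc : IsWeaklyCompactOp D) : IsDerivation (topCenterDeriv D) := fun G H => by
  ext K
  simp only [add_apply, rAct_apply, lAct_apply, topCenterDeriv_apply]
  linear_combination -apply_dualMap_mul_of_mem_topCenter hD hcyc hwc K.2 G H

lemma dualMap_comp_topCenterDeriv_comp (hcyc : IsCyclicDeriv D) :
    topCenter.inclusionInDoubleDual.dualMap ∘L topCenterDeriv D ∘L
      topCenter.inclusionInDoubleDual = D := by
  ext a b
  exact neg_eq_of_add_eq_zero_left (hcyc a b)

end TopCenterDeriv

theorem approxCyclicAmenable_of_topCenter_general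
    {A : Type u} [NonUnitalNormedRing A] [NormedSpace ℂ A]
    [IsScalarTower ℂ A A] [SMulCommClass ℂ A A]
    (hwc : ∀ D : A →L[ℂ] (A →L[ℂ] ℂ), IsDerivation D → IsCyclicDeriv D → IsWeaklyCompactOp D)
    (hZ : ApproxCyclicAmenable ↥(topCenter A)) :
    ApproxCyclicAmenable A := by
  intro D hD hcyc
  have hwcD := hwc D hD hcyc
  have := (hZ _ (isDerivation_topCenterDeriv hD hcyc hwcD)
    (isCyclicDeriv_topCenterDeriv hcyc hwcD)).dualMap_comp_comp
      (φ := topCenter.inclusionInDoubleDual) fun a b => Subtype.ext (inclusionInDoubleDual_mul a b)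
  rwa [dualMap_comp_topCenterDeriv_comp hcyc] at this

/-- Suppose every cyclic bounded derivation `D : A → A*` is weakly
compact.  If the topological centre `Z(A**)` of `(A**, □)` is approximately cyclic
amenable, then so is `A`. -/
theorem approxCyclicAmenable_of_topCenter
    {A : Type u} [NonUnitalNormedRing A] [NormedSpace ℂ A]
    [IsScalarTower ℂ A A] [SMulCommClass ℂ A A] [CompleteSpace A]
    (hwc : ∀ D : A →L[ℂ] (A →L[ℂ] ℂ), IsDerivation D → IsCyclicDeriv D → IsWeaklyCompactOp D)
    (hZ : ApproxCyclicAmenable ↥(topCenter A)) :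
    ApproxCyclicAmenable A :=
  approxCyclicAmenable_of_topCenter_general hwc hZ
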